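/- arXiv:2410.19502 — 6 statements merged into one kernel-verified Lean document; each statement's English description precedes it below -/
import Mathlib

section
/- Suppose each f_j is strictly convex (and each B_j(x) is symmetric positive definite) and let Δ > 0. Then x ∈ ℝⁿ is a critical point of (MOP) if and only if d(x,Δ) = 0, i.e., if and only if 0 is the (unique) minimizer of d ↦ Q(x,d) over the closed ball {d : ‖d‖ ≤ Δ}. -/
open scoped RealInnerProductSpace Topology
open Filter Set

-- auxiliary: one-sided directional derivative of a C¹ function
lemma aux_dirderiv {n : ℕ} (f : EuclideanSpace ℝ (Fin n) → ℝ) (hf : ContDiff ℝ 1 f)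
    (x d : EuclideanSpace ℝ (Fin n)) :
    Tendsto (fun α : ℝ => (f (x + α • d) - f x) / α) (𝓝[>] (0:ℝ))
      (𝓝 ⟪gradient f x, d⟫) := by
  have hdiff : DifferentiableAt ℝ f x := (hf.differentiable one_ne_zero) x
  have hgrad := hdiff.hasGradientAt
  have hfd : HasFDerivAt f (InnerProductSpace.toDual ℝ _ (gradient f x)) x :=
    hasGradientAt_iff_hasFDerivAt.mp hgrad
  have hc : HasDerivAt (fun α : ℝ => x + α • d) d 0 := by
    simpa using ((hasDerivAt_id' (0:ℝ)).smul_const d).const_add x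
  have hcomp : HasDerivAt (fun α : ℝ => f (x + α • d)) ⟪gradient f x, d⟫ 0 := by
    have hfd' : HasFDerivAt f (InnerProductSpace.toDual ℝ _ (gradient f x)) (x + (0:ℝ) • d) := by
      simpa using hfd
    have := hfd'.comp_hasDerivAt (f := fun α : ℝ => x + α • d) 0 hc
    rw [InnerProductSpace.toDual_apply_apply] at this
    exact this
  have := hasDerivAt_iff_tendsto_slope.mp hcomp
  have h2 : Tendsto (slope (fun α : ℝ => f (x + α • d)) 0) (𝓝[>] (0:ℝ))
      (𝓝 ⟪gradient f x, d⟫) :=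
    this.mono_left (nhdsWithin_mono _ (fun a ha => ne_of_gt ha))
  refine h2.congr (fun α => ?_)
  simp [slope_def_field, div_eq_inv_mul]



/-- **Lemma on criticality via the subproblem.** Suppose each `f j`
is strictly convex and each `B j` is symmetric positive definite, and let `Δ > 0`.
If `d0 = d(x,Δ)` is the (unique) minimizer of
`Q d = max_j [⟪∇f_j(x), d⟫ + ½ ⟪d, B_j d⟫ + g_j(x+d) − g_j(x)]` over the closed
ball `‖d‖ ≤ Δ`, then `x` is a critical point of (MOP) if and only if `d0 = 0`. -/
theorem critical_iff_subproblem_solution_zero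
    {n m : ℕ} [NeZero m]
    (f g : Fin m → EuclideanSpace ℝ (Fin n) → ℝ)
    (hf_sconv : ∀ j, StrictConvexOn ℝ Set.univ (f j))
    (hf_smooth : ∀ j, ContDiff ℝ 1 (f j))
    (hg_conv : ∀ j, ConvexOn ℝ Set.univ (g j))
    (hg_cont : ∀ j, Continuous (g j))
    (F : Fin m → EuclideanSpace ℝ (Fin n) → ℝ)
    (hF : ∀ j y, F j y = f j y + g j y)
    (x : EuclideanSpace ℝ (Fin n))
    (B : Fin m → EuclideanSpace ℝ (Fin n) →L[ℝ] EuclideanSpace ℝ (Fin n))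
    (hB_symm : ∀ j u v, ⟪B j u, v⟫ = ⟪u, B j v⟫)
    (hB_posdef : ∀ j d, d ≠ 0 → 0 < ⟪d, B j d⟫)
    (Q : EuclideanSpace ℝ (Fin n) → ℝ)
    (hQ : ∀ d, Q d = (Finset.univ : Finset (Fin m)).sup' Finset.univ_nonempty
      (fun j => ⟪gradient (f j) x, d⟫ + (1 / 2) * ⟪d, B j d⟫ + g j (x + d) - g j x))
    (Δ : ℝ) (hΔ : 0 < Δ)
    (d0 : EuclideanSpace ℝ (Fin n))
    (hd0_feas : ‖d0‖ ≤ Δ)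
    (hd0_min : ∀ d', ‖d'‖ ≤ Δ → Q d0 ≤ Q d')
    -- `F' j d` is the one-sided directional derivative of `F j` at `x` in direction `d`
    (F' : Fin m → EuclideanSpace ℝ (Fin n) → ℝ)
    (hF' : ∀ j d, Filter.Tendsto (fun α : ℝ => (F j (x + α • d) - F j x) / α)
      (nhdsWithin 0 (Set.Ioi 0)) (nhds (F' j d))) :
    (∀ d : EuclideanSpace ℝ (Fin n), ∃ j, 0 ≤ F' j d) ↔ d0 = 0 := by
  have hQ0 : Q 0 = 0 := by
    rw [hQ]
    simp
  -- tendsto of the g-difference quotients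
  have hgd : ∀ j d, Filter.Tendsto (fun α : ℝ => (g j (x + α • d) - g j x) / α)
      (𝓝[>] (0:ℝ)) (𝓝 (F' j d - ⟪gradient (f j) x, d⟫)) := by
    intro j d
    have h1 := (hF' j d).sub (aux_dirderiv (f j) (hf_smooth j) x d)
    refine h1.congr (fun α => ?_)
    rw [← sub_div]
    congr 1
    simp only [hF]
    ring
  -- tendsto of h_j
  have hh : ∀ j d, Filter.Tendsto (fun α : ℝ =>
      ⟪gradient (f j) x, d⟫ + α / 2 * ⟪d, B j d⟫ + (g j (x + α • d) - g j x) / α)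
      (𝓝[>] (0:ℝ)) (𝓝 (F' j d)) := by
    intro j d
    have h2 : Filter.Tendsto (fun α : ℝ => α / 2 * ⟪d, B j d⟫) (𝓝[>] (0:ℝ))
        (𝓝 0) := by
      have : Filter.Tendsto (fun α : ℝ => α / 2 * ⟪d, B j d⟫) (𝓝 (0:ℝ)) (𝓝 ((0:ℝ)/2 * ⟪d, B j d⟫)) :=
        ((continuous_id.div_const 2).mul continuous_const).tendsto 0
      simpa using this.mono_left nhdsWithin_le_nhds
    have h3 : Filter.Tendsto (fun α : ℝ =>
        ⟪gradient (f j) x, d⟫ + α / 2 * ⟪d, B j d⟫ + (g j (x + α • d) - g j x) / α)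
        (𝓝[>] (0:ℝ)) (𝓝 (⟪gradient (f j) x, d⟫ + 0 + (F' j d - ⟪gradient (f j) x, d⟫))) :=
      (Filter.Tendsto.add (tendsto_const_nhds) h2).add (hgd j d)
    simpa using h3
  -- term identity
  have hterm : ∀ (j : Fin m) (d : EuclideanSpace ℝ (Fin n)) (α : ℝ), 0 < α →
      ⟪gradient (f j) x, α • d⟫ + (1 / 2) * ⟪α • d, B j (α • d)⟫ + g j (x + α • d) - g j x
      = α * (⟪gradient (f j) x, d⟫ + α / 2 * ⟪d, B j d⟫ + (g j (x + α • d) - g j x) / α) := by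
    intro j d α hα
    rw [map_smul, real_inner_smul_left, real_inner_smul_right, real_inner_smul_right]
    field_simp
    ring
  constructor
  · -- critical ⇒ d0 = 0
    intro hcrit
    by_contra hd0
    obtain ⟨j, hj⟩ := hcrit d0
    have hKpos : 0 < ⟪d0, B j d0⟫ := hB_posdef j d0 hd0
    have hQd0 : Q d0 ≤ 0 := by
      have := hd0_min 0 (by simpa using hΔ.le)
      rwa [hQ0] at this
    have hterm0 : ⟪gradient (f j) x, d0⟫ + (1 / 2) * ⟪d0, B j d0⟫ + g j (x + d0) - g j x ≤ 0 := by
      refine le_trans ?_ hQd0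
      rw [hQ]
      exact Finset.le_sup' (fun j => ⟪gradient (f j) x, d0⟫ + (1 / 2) * ⟪d0, B j d0⟫ + g j (x + d0) - g j x) (Finset.mem_univ j)
    have hineq : ∀ᶠ α in 𝓝[>] (0:ℝ),
        ⟪gradient (f j) x, d0⟫ + α / 2 * ⟪d0, B j d0⟫ + (g j (x + α • d0) - g j x) / α
          ≤ (α - 1) / 2 * ⟪d0, B j d0⟫ := by
      filter_upwards [Ioc_mem_nhdsGT_of_mem (by constructor <;> norm_num : (0:ℝ) ∈ Set.Ico (0:ℝ) 1)]
        with α hα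
      have hαpos : 0 < α := hα.1
      have hconv := (hg_conv j).2 (Set.mem_univ x) (Set.mem_univ (x + d0))
        (by linarith [hα.2] : (0:ℝ) ≤ 1 - α) hαpos.le (by ring)
      have heq : (1 - α) • x + α • (x + d0) = x + α • d0 := by module
      rw [heq] at hconv
      simp only [smul_eq_mul] at hconv
      have hgq : (g j (x + α • d0) - g j x) / α ≤ g j (x + d0) - g j x := by
        rw [div_le_iff₀ hαpos]
        nlinarith
      nlinarith
    have hlimR : Filter.Tendsto (fun α : ℝ => (α - 1) / 2 * ⟪d0, B j d0⟫) (𝓝[>] (0:ℝ))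
        (𝓝 (((0:ℝ) - 1) / 2 * ⟪d0, B j d0⟫)) := by
      have : Filter.Tendsto (fun α : ℝ => (α - 1) / 2 * ⟪d0, B j d0⟫) (𝓝 (0:ℝ))
          (𝓝 (((0:ℝ) - 1) / 2 * ⟪d0, B j d0⟫)) :=
        (((continuous_id.sub continuous_const).div_const 2).mul continuous_const).tendsto 0
      exact this.mono_left nhdsWithin_le_nhds
    have := le_of_tendsto_of_tendsto (hh j d0) hlimR hineq
    nlinarith
  · -- d0 = 0 ⇒ critical
    intro hd0 d
    by_contra hno
    push_neg at hno
    rcases eq_or_ne d 0 with rfl | hdne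
    · have j : Fin m := ⟨0, Nat.pos_of_ne_zero (NeZero.ne m)⟩
      have hzero : Filter.Tendsto (fun α : ℝ => (F j (x + α • (0:EuclideanSpace ℝ (Fin n))) - F j x) / α)
          (𝓝[>] (0:ℝ)) (𝓝 0) := by
        have : (fun α : ℝ => (F j (x + α • (0:EuclideanSpace ℝ (Fin n))) - F j x) / α) = fun _ => 0 := by
          funext α; simp
        rw [this]
        exact tendsto_const_nhds
      have hF0 : F' j 0 = 0 := tendsto_nhds_unique (hF' j 0) hzero
      have h0 := hno j
      rw [hF0] at h0
      exact lt_irrefl 0 h0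
    · have hev : ∀ᶠ α in 𝓝[>] (0:ℝ), ∀ j : Fin m,
          ⟪gradient (f j) x, d⟫ + α / 2 * ⟪d, B j d⟫ + (g j (x + α • d) - g j x) / α < 0 := by
        rw [Filter.eventually_all]
        intro j
        exact (hh j d).eventually_lt_const (hno j)
      have hnorm : 0 < ‖d‖ := norm_pos_iff.mpr hdne
      have hfeas : ∀ᶠ α in 𝓝[>] (0:ℝ), ‖α • d‖ ≤ Δ := by
        filter_upwards [Ioc_mem_nhdsGT_of_mem
          (⟨le_refl 0, div_pos hΔ hnorm⟩ : (0:ℝ) ∈ Set.Ico (0:ℝ) (Δ / ‖d‖))] with α hα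
        rw [norm_smul, Real.norm_eq_abs, abs_of_pos hα.1]
        calc α * ‖d‖ ≤ (Δ / ‖d‖) * ‖d‖ := by nlinarith [hα.2]
          _ = Δ := by field_simp
      obtain ⟨α, hα1, hα2, hα3⟩ := (hev.and (hfeas.and (self_mem_nhdsWithin))).exists
      have hαpos : 0 < α := hα3
      have hQd : (0:ℝ) ≤ Q (α • d) := by
        have := hd0_min (α • d) hα2
        rw [hd0, hQ0] at this
        exact this
      rw [hQ] at hQd
      obtain ⟨j, -, hjeq⟩ := Finset.exists_mem_eq_sup' Finset.univ_nonempty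
        (fun j => ⟪gradient (f j) x, α • d⟫ + (1 / 2) * ⟪α • d, B j (α • d)⟫ + g j (x + α • d) - g j x)
      rw [hjeq, hterm j d α hαpos] at hQd
      have hneg := hα1 j
      nlinarith
end

section
/- Let x, d ∈ ℝⁿ, t ∈ ℝ, σ > 0, and suppose: (a) dᵀB_j d ≥ σ‖d‖² for each j = 1,…,m; (b) there exist λ_j ≥ 0 with Σ_j λ_j = 1, vectors ξ_j with g_j(y) ≥ g_j(x+d) + ξ_jᵀ(y−(x+d)) for all y ∈ ℝⁿ, and μ ≥ 0, such that Σ_j λ_j(∇f_j(x) + B_j d + ξ_j) + μ d = 0; (c) for every j, ∇f_j(x)ᵀd + ½ dᵀB_j d + g_j(x+d) − g_j(x) ≤ t, with λ_j(∇f_j(x)ᵀd + ½ dᵀB_j d + g_j(x+d) − g_j(x) − t) = 0. Then t ≤ −(σ/2 + μ)‖d‖². -/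
open scoped RealInnerProductSpace

/-- **decrease estimate from the KKT conditions.** Let `x, d ∈ ℝⁿ`,
`t ∈ ℝ`, `σ > 0` and suppose (a) `⟪d, B_j d⟫ ≥ σ‖d‖²` for all `j`; (b) there are
multipliers `λ_j ≥ 0` with `Σλ_j = 1`, subgradients `ξ_j ∈ ∂g_j(x+d)` and `μ ≥ 0`
with `Σ_j λ_j(∇f_j(x) + B_j d + ξ_j) + μ d = 0`; (c) for each `j`,
`⟪∇f_j(x), d⟫ + ½⟪d, B_j d⟫ + g_j(x+d) − g_j(x) ≤ t` with complementarity
`λ_j(⋯ − t) = 0`. Then `t ≤ −(σ/2 + μ)‖d‖²`. -/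
theorem kkt_decrease_estimate
    {n m : ℕ}
    (f g : Fin m → EuclideanSpace ℝ (Fin n) → ℝ)
    (hf_conv : ∀ j, ConvexOn ℝ Set.univ (f j))
    (hf_smooth : ∀ j, ContDiff ℝ 1 (f j))
    (hg_conv : ∀ j, ConvexOn ℝ Set.univ (g j))
    (hg_cont : ∀ j, Continuous (g j))
    (B : Fin m → EuclideanSpace ℝ (Fin n) →L[ℝ] EuclideanSpace ℝ (Fin n))
    (hB_symm : ∀ j u v, ⟪B j u, v⟫ = ⟪u, B j v⟫)
    (x d : EuclideanSpace ℝ (Fin n)) (t σ : ℝ) (hσ : 0 < σ)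
    (ha : ∀ j, σ * ‖d‖ ^ 2 ≤ ⟪d, B j d⟫)
    (lam : Fin m → ℝ) (xi : Fin m → EuclideanSpace ℝ (Fin n)) (μ : ℝ)
    (hlam_nonneg : ∀ j, 0 ≤ lam j)
    (hlam_sum : ∑ j, lam j = 1)
    (hxi_subgrad : ∀ j, ∀ y, g j (x + d) + ⟪xi j, y - (x + d)⟫ ≤ g j y)
    (hμ : 0 ≤ μ)
    (hstat : ∑ j, lam j • (gradient (f j) x + B j d + xi j) + μ • d = 0)
    (hfeas : ∀ j, ⟪gradient (f j) x, d⟫ + (1 / 2) * ⟪d, B j d⟫ + g j (x + d) - g j x ≤ t)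
    (hcompl : ∀ j, lam j *
      (⟪gradient (f j) x, d⟫ + (1 / 2) * ⟪d, B j d⟫ + g j (x + d) - g j x - t) = 0) :
    t ≤ -(σ / 2 + μ) * ‖d‖ ^ 2 := by

  -- abbreviation
  set q : Fin m → ℝ := fun j => ⟪gradient (f j) x, d⟫ + (1 / 2) * ⟪d, B j d⟫ + g j (x + d) - g j x with hq
  -- from complementarity, t = ∑ lam j * q j
  have ht : t = ∑ j, lam j * q j := by
    have h1 : ∑ j, lam j * (q j - t) = 0 := by
      simp only [hq]; exact Finset.sum_eq_zero fun j _ => hcompl j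
    have h2 : ∑ j, lam j * (q j - t) = (∑ j, lam j * q j) - t := by
      simp [mul_sub, Finset.sum_sub_distrib, ← Finset.sum_mul, hlam_sum]
    linarith [h1, h2.symm]
  -- subgradient inequality at y = x
  have hsub : ∀ j, g j (x + d) - g j x ≤ ⟪xi j, d⟫ := by
    intro j
    have := hxi_subgrad j x
    have hxd : x - (x + d) = -d := by abel
    rw [hxd, inner_neg_right] at this
    linarith
  -- inner product of stationarity with d
  have hst : ∑ j, lam j * (⟪gradient (f j) x, d⟫ + ⟪d, B j d⟫ + ⟪xi j, d⟫) + μ * ‖d‖ ^ 2 = 0 := by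
    have h := congrArg (fun v => ⟪v, d⟫) hstat
    simp only [inner_add_left, inner_zero_left, real_inner_smul_left, sum_inner,
      real_inner_self_eq_norm_sq] at h
    rw [← h]
    congr 1
    apply Finset.sum_congr rfl
    intro j _
    rw [hB_symm j d d]
  -- bound each term
  have hbd : ∑ j, lam j * q j ≤
      ∑ j, lam j * (⟪gradient (f j) x, d⟫ + ⟪d, B j d⟫ + ⟪xi j, d⟫)
        - (σ / 2) * ‖d‖ ^ 2 := by
    have : ∀ j ∈ Finset.univ, lam j * q j ≤
        lam j * (⟪gradient (f j) x, d⟫ + ⟪d, B j d⟫ + ⟪xi j, d⟫) - lam j * ((σ / 2) * ‖d‖ ^ 2) := by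
      intro j _
      have h1 := hsub j
      have h2 := ha j
      have h3 := hlam_nonneg j
      have : q j ≤ (⟪gradient (f j) x, d⟫ + ⟪d, B j d⟫ + ⟪xi j, d⟫) - (σ / 2) * ‖d‖ ^ 2 := by
        simp only [hq]; nlinarith
      nlinarith
    calc ∑ j, lam j * q j
        ≤ ∑ j, (lam j * (⟪gradient (f j) x, d⟫ + ⟪d, B j d⟫ + ⟪xi j, d⟫)
            - lam j * ((σ / 2) * ‖d‖ ^ 2)) := Finset.sum_le_sum this
      _ = ∑ j, lam j * (⟪gradient (f j) x, d⟫ + ⟪d, B j d⟫ + ⟪xi j, d⟫)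
            - (σ / 2) * ‖d‖ ^ 2 := by
          rw [Finset.sum_sub_distrib, ← Finset.sum_mul, hlam_sum]; ring
  have : ∑ j, lam j * (⟪gradient (f j) x, d⟫ + ⟪d, B j d⟫ + ⟪xi j, d⟫) = -(μ * ‖d‖ ^ 2) := by
    linarith
  rw [ht]
  rw [this] at hbd
  linarith
end

section
/- Under the same hypotheses (a)–(c) as in the previous theorem (KKT conditions with multipliers λ ≥ 0 summing to one, subgradients ξ_j of g_j at x+d, μ ≥ 0, and dᵀB_j d ≥ σ‖d‖² with σ > 0), one has for every j = 1,…,m: ∇f_j(x)ᵀd + g_j(x+d) − g_j(x) ≤ −(σ + μ)‖d‖². In particular, if d ≠ 0 then ∇f_j(x)ᵀd + g_j(x+d) − g_j(x) < 0 for every j, i.e., d is a descent direction for every F_j = f_j + g_j at x. -/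
open scoped RealInnerProductSpace

/-- **descent direction.** Under the KKT hypotheses (a)–(c) of the
previous theorem (multipliers `λ ≥ 0` summing to one, subgradients `ξ_j` of `g_j`
at `x+d`, `μ ≥ 0`, and `⟪d, B_j d⟫ ≥ σ‖d‖²` with `σ > 0`), for every `j` one has
`⟪∇f_j(x), d⟫ + g_j(x+d) − g_j(x) ≤ −(σ + μ)‖d‖²`; in particular if `d ≠ 0` then
`⟪∇f_j(x), d⟫ + g_j(x+d) − g_j(x) < 0` for every `j`, i.e. `d` is a descent
direction for every `F_j = f_j + g_j` at `x`. -/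
theorem kkt_descent_direction
    {n m : ℕ}
    (f g : Fin m → EuclideanSpace ℝ (Fin n) → ℝ)
    (hf_conv : ∀ j, ConvexOn ℝ Set.univ (f j))
    (hf_smooth : ∀ j, ContDiff ℝ 1 (f j))
    (hg_conv : ∀ j, ConvexOn ℝ Set.univ (g j))
    (hg_cont : ∀ j, Continuous (g j))
    (B : Fin m → EuclideanSpace ℝ (Fin n) →L[ℝ] EuclideanSpace ℝ (Fin n))
    (hB_symm : ∀ j u v, ⟪B j u, v⟫ = ⟪u, B j v⟫)
    (x d : EuclideanSpace ℝ (Fin n)) (t σ : ℝ) (hσ : 0 < σ)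
    (ha : ∀ j, σ * ‖d‖ ^ 2 ≤ ⟪d, B j d⟫)
    (lam : Fin m → ℝ) (xi : Fin m → EuclideanSpace ℝ (Fin n)) (μ : ℝ)
    (hlam_nonneg : ∀ j, 0 ≤ lam j)
    (hlam_sum : ∑ j, lam j = 1)
    (hxi_subgrad : ∀ j, ∀ y, g j (x + d) + ⟪xi j, y - (x + d)⟫ ≤ g j y)
    (hμ : 0 ≤ μ)
    (hstat : ∑ j, lam j • (gradient (f j) x + B j d + xi j) + μ • d = 0)
    (hfeas : ∀ j, ⟪gradient (f j) x, d⟫ + (1 / 2) * ⟪d, B j d⟫ + g j (x + d) - g j x ≤ t)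
    (hcompl : ∀ j, lam j *
      (⟪gradient (f j) x, d⟫ + (1 / 2) * ⟪d, B j d⟫ + g j (x + d) - g j x - t) = 0) :
    (∀ j, ⟪gradient (f j) x, d⟫ + g j (x + d) - g j x ≤ -(σ + μ) * ‖d‖ ^ 2) ∧
      (d ≠ 0 → ∀ j, ⟪gradient (f j) x, d⟫ + g j (x + d) - g j x < 0) := by
  -- subgradient inequality at y = x gives g(x+d) - g(x) ≤ ⟪ξ_j, d⟫
  have hsub : ∀ j, g j (x + d) - g j x ≤ ⟪xi j, d⟫ := by
    intro j
    have h := hxi_subgrad j x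
    have hxd : x - (x + d) = -d := by abel
    rw [hxd, inner_neg_right] at h
    linarith
  -- inner product of stationarity with d
  have h0 : ∑ j, lam j * (⟪gradient (f j) x, d⟫ + ⟪B j d, d⟫ + ⟪xi j, d⟫)
      + μ * ‖d‖ ^ 2 = 0 := by
    have h := congrArg (fun v : EuclideanSpace ℝ (Fin n) => ⟪v, d⟫) hstat
    simp only [inner_add_left, sum_inner, real_inner_smul_left, inner_zero_left] at h
    rw [real_inner_self_eq_norm_sq] at h
    simpa [inner_add_left, mul_add] using h
  -- rewrite ⟪B j d, d⟫ as ⟪d, B j d⟫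
  have hBc : ∀ j, ⟪B j d, d⟫ = ⟪d, B j d⟫ := fun j => real_inner_comm _ _
  -- complementarity: lam j * (expr) = lam j * t
  have hct : ∀ j, lam j * (⟪gradient (f j) x, d⟫ + (1 / 2) * ⟪d, B j d⟫
      + (g j (x + d) - g j x)) = lam j * t := by
    intro j
    have := hcompl j
    nlinarith [this]
  -- sum bound
  have hsum1 : ∑ j, lam j * (⟪gradient (f j) x, d⟫ + ⟪d, B j d⟫
      + (g j (x + d) - g j x)) ≤ -(μ * ‖d‖ ^ 2) := by
    have hle : ∑ j, lam j * (⟪gradient (f j) x, d⟫ + ⟪d, B j d⟫ + (g j (x + d) - g j x))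
        ≤ ∑ j, lam j * (⟪gradient (f j) x, d⟫ + ⟪B j d, d⟫ + ⟪xi j, d⟫) := by
      apply Finset.sum_le_sum
      intro j _
      have := hsub j
      have := hBc j
      have := hlam_nonneg j
      nlinarith
    linarith
  have hsum2 : ∑ j, lam j * (⟪gradient (f j) x, d⟫ + ⟪d, B j d⟫ + (g j (x + d) - g j x))
      = t + ∑ j, lam j * ((1 / 2) * ⟪d, B j d⟫) := by
    have : ∀ j ∈ Finset.univ, lam j * (⟪gradient (f j) x, d⟫ + ⟪d, B j d⟫
        + (g j (x + d) - g j x)) = lam j * t + lam j * ((1 / 2) * ⟪d, B j d⟫) := by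
      intro j _
      have := hct j
      nlinarith [this]
    rw [Finset.sum_congr rfl this, Finset.sum_add_distrib, ← Finset.sum_mul, hlam_sum,
      one_mul]
  have hsum3 : (σ / 2) * ‖d‖ ^ 2 ≤ ∑ j, lam j * ((1 / 2) * ⟪d, B j d⟫) := by
    calc (σ / 2) * ‖d‖ ^ 2 = ∑ j, lam j * ((1 / 2) * (σ * ‖d‖ ^ 2)) := by
          rw [← Finset.sum_mul, hlam_sum]; ring
      _ ≤ ∑ j, lam j * ((1 / 2) * ⟪d, B j d⟫) := by
          apply Finset.sum_le_sum
          intro j _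
          have := ha j
          have := hlam_nonneg j
          nlinarith
  have ht : t ≤ -(μ * ‖d‖ ^ 2) - (σ / 2) * ‖d‖ ^ 2 := by
    rw [hsum2] at hsum1; linarith
  have main : ∀ j, ⟪gradient (f j) x, d⟫ + g j (x + d) - g j x ≤ -(σ + μ) * ‖d‖ ^ 2 := by
    intro j
    have h1 := hfeas j
    have h2 := ha j
    nlinarith
  refine ⟨main, fun hd j => ?_⟩
  have hpos : 0 < ‖d‖ ^ 2 := pow_pos (norm_pos_iff.mpr hd) 2
  have := main j
  nlinarith
end

section
/- For every x ∈ ℝⁿ, every Δ > 0, and every α ∈ [0,1], one has θ(x;αΔ) ≤ α θ(x;Δ). -/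
open scoped RealInnerProductSpace

/-- For every `x ∈ ℝⁿ`, every `Δ > 0` and every `α ∈ [0,1]`,
one has `θ(x; αΔ) ≤ α θ(x; Δ)`, where
`θ(x;Δ) = min_{‖d‖≤Δ} max_j [⟪∇f_j(x), d⟫ + g_j(x+d) − g_j(x)]`. -/
theorem theta_scaling_inequality
    {n m : ℕ} [NeZero m]
    (f g : Fin m → EuclideanSpace ℝ (Fin n) → ℝ)
    (hf_conv : ∀ j, ConvexOn ℝ Set.univ (f j))
    (hf_smooth : ∀ j, ContDiff ℝ 1 (f j))
    (hg_conv : ∀ j, ConvexOn ℝ Set.univ (g j))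
    (hg_cont : ∀ j, Continuous (g j))
    (x : EuclideanSpace ℝ (Fin n)) (Δ : ℝ) (hΔ : 0 < Δ)
    (α : ℝ) (hα : α ∈ Set.Icc (0 : ℝ) 1)
    (θΔ θαΔ : ℝ)
    (hθΔ : IsLeast ((fun d => (Finset.univ : Finset (Fin m)).sup' Finset.univ_nonempty
        (fun j => ⟪gradient (f j) x, d⟫ + g j (x + d) - g j x)) ''
      {d : EuclideanSpace ℝ (Fin n) | ‖d‖ ≤ Δ}) θΔ)
    (hθαΔ : IsLeast ((fun d => (Finset.univ : Finset (Fin m)).sup' Finset.univ_nonempty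
        (fun j => ⟪gradient (f j) x, d⟫ + g j (x + d) - g j x)) ''
      {d : EuclideanSpace ℝ (Fin n) | ‖d‖ ≤ α * Δ}) θαΔ) :
    θαΔ ≤ α * θΔ := by
  obtain ⟨hα0, hα1⟩ := hα
  obtain ⟨d, hd, hdval⟩ := hθΔ.1
  simp only [Set.mem_setOf_eq] at hd
  have hmem : (α • d : EuclideanSpace ℝ (Fin n)) ∈
      {d : EuclideanSpace ℝ (Fin n) | ‖d‖ ≤ α * Δ} := by
    simp only [Set.mem_setOf_eq, norm_smul, Real.norm_eq_abs, abs_of_nonneg hα0]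
    exact mul_le_mul_of_nonneg_left hd hα0
  have h1 : θαΔ ≤ (Finset.univ : Finset (Fin m)).sup' Finset.univ_nonempty
      (fun j => ⟪gradient (f j) x, α • d⟫ + g j (x + α • d) - g j x) :=
    hθαΔ.2 ⟨α • d, hmem, rfl⟩
  refine h1.trans ?_
  rw [← hdval]
  rw [Finset.sup'_le_iff]
  intro j _
  have hkey : ⟪gradient (f j) x, α • d⟫ + g j (x + α • d) - g j x ≤
      α * (⟪gradient (f j) x, d⟫ + g j (x + d) - g j x) := by
    have hconv := (hg_conv j).2 (Set.mem_univ (x + d)) (Set.mem_univ x)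
      hα0 (sub_nonneg.mpr hα1) (by ring)
    have hx : α • (x + d) + (1 - α) • x = x + α • d := by
      module
    rw [hx] at hconv
    have hinner : ⟪gradient (f j) x, α • d⟫ = α * ⟪gradient (f j) x, d⟫ := by
      rw [inner_smul_right]
    rw [hinner, smul_eq_mul, smul_eq_mul] at *
    nlinarith [hconv]
  refine hkey.trans ?_
  have : ⟪gradient (f j) x, d⟫ + g j (x + d) - g j x ≤
      (Finset.univ : Finset (Fin m)).sup' Finset.univ_nonempty
      (fun j => ⟪gradient (f j) x, d⟫ + g j (x + d) - g j x) :=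
    Finset.le_sup' (fun j => ⟪gradient (f j) x, d⟫ + g j (x + d) - g j x) (Finset.mem_univ j)
  exact mul_le_mul_of_nonneg_left this hα0
end

section
/- A point x* ∈ ℝⁿ is a critical point of (MOP) if and only if θ(x*;Δ) = 0 for some Δ > 0 (equivalently, for every Δ > 0). -/
open scoped RealInnerProductSpace

section Aux

variable {E : Type*} [NormedAddCommGroup E] [InnerProductSpace ℝ E] [CompleteSpace E]

lemma slope_tendsto_grad (f : E → ℝ) (hf : ContDiff ℝ 1 f) (x d : E) :
    Filter.Tendsto (fun α : ℝ => (f (x + α • d) - f x) / α)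
      (nhdsWithin 0 (Set.Ioi 0)) (nhds ⟪gradient f x, d⟫) := by
  have hdiff : DifferentiableAt ℝ f x := (hf.differentiable one_ne_zero).differentiableAt
  have hgrad : HasGradientAt f (gradient f x) x := hdiff.hasGradientAt
  have hfd : HasFDerivAt f ((InnerProductSpace.toDual ℝ E) (gradient f x)) x := hgrad
  have hfd' : HasFDerivAt f ((InnerProductSpace.toDual ℝ E) (gradient f x))
      (x + (0:ℝ) • d) := by simpa using hfd
  have hline : HasDerivAt (fun α : ℝ => x + α • d) d 0 := by
    simpa using ((hasDerivAt_id (0:ℝ)).smul_const d).const_add x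
  have hcomp : HasDerivAt (fun α : ℝ => f (x + α • d)) ⟪gradient f x, d⟫ 0 := by
    have := hfd'.comp_hasDerivAt 0 hline
    rw [InnerProductSpace.toDual_apply_apply] at this
    exact this
  have h := hasDerivAt_iff_tendsto_slope.mp hcomp
  have h2 := h.mono_left (nhdsWithin_mono 0
    (fun a ha => ne_of_gt ha : Set.Ioi (0:ℝ) ⊆ {(0:ℝ)}ᶜ))
  refine h2.congr fun α => ?_
  simp [slope_def_field]

lemma convexOn_slope_le (g : E → ℝ) (hg : ConvexOn ℝ Set.univ g) (x d : E)
    {α : ℝ} (h0 : 0 < α) (h1 : α ≤ 1) :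
    g (x + α • d) - g x ≤ α * (g (x + d) - g x) := by
  have key := hg.2 (Set.mem_univ x) (Set.mem_univ (x + d))
    (by linarith : (0:ℝ) ≤ 1 - α) h0.le (by ring)
  have hx : (1 - α) • x + α • (x + d) = x + α • d := by
    simp [smul_add, sub_smul]; abel
  rw [hx] at key
  simp only [smul_eq_mul] at key
  nlinarith [key]

lemma gradient_inner_le (f : E → ℝ) (hconv : ConvexOn ℝ Set.univ f)
    (hf : ContDiff ℝ 1 f) (x d : E) : ⟪gradient f x, d⟫ ≤ f (x + d) - f x := by
  refine le_of_tendsto (slope_tendsto_grad f hf x d) ?_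
  filter_upwards [Ioc_mem_nhdsGT_of_mem (Set.mem_Ico.mpr ⟨le_rfl, zero_lt_one⟩)]
    with α hα
  have h := convexOn_slope_le f hconv x d hα.1 hα.2
  rw [div_le_iff₀ hα.1]
  nlinarith [h]

end Aux

/-- A point `x*` is a critical point of (MOP) — i.e.
`max_j F_j'(x*; d) ≥ 0` for every direction `d`, where `F_j = f_j + g_j` — if and
only if `θ(x*;Δ) = 0` for some `Δ > 0`, equivalently for every `Δ > 0`; here
`θ(x*;Δ) = min_{‖d‖≤Δ} max_j [⟪∇f_j(x*), d⟫ + g_j(x*+d) − g_j(x*)]`. -/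
theorem critical_iff_theta_zero
    {n m : ℕ} [NeZero m]
    (f g : Fin m → EuclideanSpace ℝ (Fin n) → ℝ)
    (hf_conv : ∀ j, ConvexOn ℝ Set.univ (f j))
    (hf_smooth : ∀ j, ContDiff ℝ 1 (f j))
    (hg_conv : ∀ j, ConvexOn ℝ Set.univ (g j))
    (hg_cont : ∀ j, Continuous (g j))
    (F : Fin m → EuclideanSpace ℝ (Fin n) → ℝ)
    (hF : ∀ j y, F j y = f j y + g j y)
    (xstar : EuclideanSpace ℝ (Fin n))
    -- `F' j d` is the one-sided directional derivative of `F j` at `xstar` in direction `d`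
    (F' : Fin m → EuclideanSpace ℝ (Fin n) → ℝ)
    (hF' : ∀ j d, Filter.Tendsto (fun α : ℝ => (F j (xstar + α • d) - F j xstar) / α)
      (nhdsWithin 0 (Set.Ioi 0)) (nhds (F' j d)))
    -- `θ Δ` is the optimal value of the linearized subproblem with radius `Δ`
    (θ : ℝ → ℝ)
    (hθ : ∀ Δ : ℝ, 0 < Δ →
      IsLeast ((fun d => (Finset.univ : Finset (Fin m)).sup' Finset.univ_nonempty
          (fun j => ⟪gradient (f j) xstar, d⟫ + g j (xstar + d) - g j xstar)) ''
        {d : EuclideanSpace ℝ (Fin n) | ‖d‖ ≤ Δ}) (θ Δ)) :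
    ((∀ d : EuclideanSpace ℝ (Fin n), ∃ j, 0 ≤ F' j d) ↔ (∃ Δ : ℝ, 0 < Δ ∧ θ Δ = 0)) ∧
      ((∀ d : EuclideanSpace ℝ (Fin n), ∃ j, 0 ≤ F' j d) ↔ (∀ Δ : ℝ, 0 < Δ → θ Δ = 0)) := by
  -- F' is bounded above by the linearized model
  have hFle : ∀ j d, F' j d ≤ ⟪gradient (f j) xstar, d⟫ + (g j (xstar + d) - g j xstar) := by
    intro j d
    have htend2 : Filter.Tendsto
        (fun α : ℝ => (f j (xstar + α • d) - f j xstar) / α + (g j (xstar + d) - g j xstar))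
        (nhdsWithin 0 (Set.Ioi 0))
        (nhds (⟪gradient (f j) xstar, d⟫ + (g j (xstar + d) - g j xstar))) :=
      (slope_tendsto_grad (f j) (hf_smooth j) xstar d).add_const _
    refine le_of_tendsto_of_tendsto (hF' j d) htend2 ?_
    filter_upwards [Ioc_mem_nhdsGT_of_mem (Set.mem_Ico.mpr ⟨le_rfl, zero_lt_one⟩)]
      with α hα
    have hα0 := hα.1
    have hg' := convexOn_slope_le (g j) (hg_conv j) xstar d hα0 hα.2
    simp only [hF]
    have heq : (f j (xstar + α • d) + g j (xstar + α • d) - (f j xstar + g j xstar)) / α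
        = (f j (xstar + α • d) - f j xstar) / α
          + (g j (xstar + α • d) - g j xstar) / α := by ring
    rw [heq]
    have hgd : (g j (xstar + α • d) - g j xstar) / α ≤ g j (xstar + d) - g j xstar := by
      rw [div_le_iff₀ hα0]; nlinarith [hg']
    linarith
  -- value of the model at d = 0 is 0
  have hφzero : (Finset.univ : Finset (Fin m)).sup' Finset.univ_nonempty
      (fun j => ⟪gradient (f j) xstar, (0 : EuclideanSpace ℝ (Fin n))⟫
        + g j (xstar + 0) - g j xstar) = 0 := by
    simp
  -- criticality implies θ Δ = 0 for every Δ > 0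
  have h1 : (∀ d : EuclideanSpace ℝ (Fin n), ∃ j, 0 ≤ F' j d) →
      ∀ Δ : ℝ, 0 < Δ → θ Δ = 0 := by
    intro hcrit Δ hΔ
    have hle : θ Δ ≤ 0 := by
      have hmem : (0 : EuclideanSpace ℝ (Fin n)) ∈ {d : EuclideanSpace ℝ (Fin n) | ‖d‖ ≤ Δ} := by
        simp [hΔ.le]
      have := (hθ Δ hΔ).2 (Set.mem_image_of_mem _ hmem)
      rw [hφzero] at this
      exact this
    have hge : 0 ≤ θ Δ := by
      obtain ⟨d, hd, hval⟩ := (hθ Δ hΔ).1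
      obtain ⟨j, hj⟩ := hcrit d
      have h2 := hFle j d
      have h3 : ⟪gradient (f j) xstar, d⟫ + g j (xstar + d) - g j xstar ≤
          (Finset.univ : Finset (Fin m)).sup' Finset.univ_nonempty
            (fun j => ⟪gradient (f j) xstar, d⟫ + g j (xstar + d) - g j xstar) :=
        Finset.le_sup' (fun j => ⟪gradient (f j) xstar, d⟫ + g j (xstar + d) - g j xstar)
          (Finset.mem_univ j)
      beta_reduce at hval
      rw [hval] at h3
      linarith
    linarith
  -- θ Δ = 0 for some Δ > 0 implies criticality
  have h2 : (∃ Δ : ℝ, 0 < Δ ∧ θ Δ = 0) →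
      ∀ d : EuclideanSpace ℝ (Fin n), ∃ j, 0 ≤ F' j d := by
    rintro ⟨Δ, hΔ, hθ0⟩ d
    by_contra hcon
    push_neg at hcon
    have hev : ∀ᶠ α in nhdsWithin (0:ℝ) (Set.Ioi 0),
        ∀ j, (F j (xstar + α • d) - F j xstar) / α < 0 :=
      Filter.eventually_all.mpr fun j => (hF' j d).eventually_lt_const (hcon j)
    have hns : Filter.Tendsto (fun α : ℝ => ‖α • d‖) (nhdsWithin (0:ℝ) (Set.Ioi 0)) (nhds 0) := by
      have hc : Continuous fun α : ℝ => ‖α • (d : EuclideanSpace ℝ (Fin n))‖ :=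
        (continuous_id.smul continuous_const).norm
      have h0 : Filter.Tendsto (fun α : ℝ => ‖α • d‖)
          (nhdsWithin (0:ℝ) (Set.Ioi 0)) (nhds ‖(0:ℝ) • (d : EuclideanSpace ℝ (Fin n))‖) :=
        (hc.tendsto 0).mono_left nhdsWithin_le_nhds
      simpa using h0
    have hnorm : ∀ᶠ α in nhdsWithin (0:ℝ) (Set.Ioi 0), ‖α • d‖ ≤ Δ :=
      hns.eventually_le_const hΔ
    obtain ⟨α, hq, hn, hαpos⟩ := (hev.and (hnorm.and self_mem_nhdsWithin)).exists
    have hα0 : (0:ℝ) < α := hαpos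
    -- θ Δ ≤ model value at α • d
    have hmem : (α • d) ∈ {d : EuclideanSpace ℝ (Fin n) | ‖d‖ ≤ Δ} := hn
    have hle := (hθ Δ hΔ).2 (Set.mem_image_of_mem _ hmem)
    have hneg : (Finset.univ : Finset (Fin m)).sup' Finset.univ_nonempty
        (fun j => ⟪gradient (f j) xstar, α • d⟫ + g j (xstar + α • d) - g j xstar) < 0 := by
      rw [Finset.sup'_lt_iff]
      intro j _
      have hFneg : F j (xstar + α • d) - F j xstar < 0 := by
        have h5 := hq j
        have h6 : F j (xstar + α • d) - F j xstar
            = (F j (xstar + α • d) - F j xstar) / α * α :=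
          (div_mul_cancel₀ _ (ne_of_gt hα0)).symm
        rw [h6]
        exact mul_neg_of_neg_of_pos h5 hα0
      have hfgrad := gradient_inner_le (f j) (hf_conv j) (hf_smooth j) xstar (α • d)
      rw [hF, hF] at hFneg
      linarith
    rw [hθ0] at hle
    linarith
  exact ⟨⟨fun hc => ⟨1, one_pos, h1 hc 1 one_pos⟩, h2⟩,
    ⟨fun hc => h1 hc, fun h => h2 ⟨1, one_pos, h 1 one_pos⟩⟩⟩
end

section
/- Let x ∈ ℝⁿ, let B_j (j = 1,…,m) be symmetric matrices and b > 0 with dᵀB_j d ≤ b‖d‖² for all d ∈ ℝⁿ and all j. Let Δ₀ > 0 and set t₀ = min_{‖d‖≤Δ₀} max_{1≤j≤m} [∇f_j(x)ᵀd + ½ dᵀB_j d + g_j(x+d) − g_j(x)]. Then for every Δ ≥ Δ₀: t₀ ≤ (θ(x;Δ)/(2Δ)) · min{ Δ₀, −θ(x;Δ)/(bΔ) }. -/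
open scoped RealInnerProductSpace

/-- **key trust-region decrease lemma.** Suppose each `B j` is
symmetric with `⟪d, B_j d⟫ ≤ b‖d‖²` for all `d` and some `b > 0`. Let `Δ₀ > 0`
and let `t₀ = min_{‖d‖≤Δ₀} max_j [⟪∇f_j(x), d⟫ + ½⟪d, B_j d⟫ + g_j(x+d) − g_j(x)]`.
Then for every `Δ ≥ Δ₀`,
`t₀ ≤ (θ(x;Δ)/(2Δ)) · min { Δ₀, −θ(x;Δ)/(bΔ) }`, where
`θ(x;Δ) = min_{‖d‖≤Δ} max_j [⟪∇f_j(x), d⟫ + g_j(x+d) − g_j(x)]`. -/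
theorem trust_region_decrease_lemma
    {n m : ℕ} [NeZero m]
    (f g : Fin m → EuclideanSpace ℝ (Fin n) → ℝ)
    (hf_conv : ∀ j, ConvexOn ℝ Set.univ (f j))
    (hf_smooth : ∀ j, ContDiff ℝ 1 (f j))
    (hg_conv : ∀ j, ConvexOn ℝ Set.univ (g j))
    (hg_cont : ∀ j, Continuous (g j))
    (x : EuclideanSpace ℝ (Fin n))
    (B : Fin m → EuclideanSpace ℝ (Fin n) →L[ℝ] EuclideanSpace ℝ (Fin n))
    (hB_symm : ∀ j u v, ⟪B j u, v⟫ = ⟪u, B j v⟫)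
    (b : ℝ) (hb : 0 < b)
    (hB_bound : ∀ j d, ⟪d, B j d⟫ ≤ b * ‖d‖ ^ 2)
    (Δ₀ : ℝ) (hΔ₀ : 0 < Δ₀)
    (t₀ : ℝ)
    (ht₀ : IsLeast ((fun d => (Finset.univ : Finset (Fin m)).sup' Finset.univ_nonempty
        (fun j => ⟪gradient (f j) x, d⟫ + (1 / 2) * ⟪d, B j d⟫ + g j (x + d) - g j x)) ''
      {d : EuclideanSpace ℝ (Fin n) | ‖d‖ ≤ Δ₀}) t₀)
    (θ : ℝ → ℝ)
    (hθ : ∀ Δ : ℝ, Δ₀ ≤ Δ →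
      IsLeast ((fun d => (Finset.univ : Finset (Fin m)).sup' Finset.univ_nonempty
          (fun j => ⟪gradient (f j) x, d⟫ + g j (x + d) - g j x)) ''
        {d : EuclideanSpace ℝ (Fin n) | ‖d‖ ≤ Δ}) (θ Δ)) :
    ∀ Δ : ℝ, Δ₀ ≤ Δ →
      t₀ ≤ (θ Δ / (2 * Δ)) * min Δ₀ (-(θ Δ) / (b * Δ)) := by

  intro Δ hΔ
  have hΔpos : 0 < Δ := lt_of_lt_of_le hΔ₀ hΔ
  obtain ⟨⟨d, hd, hdval⟩, hlb⟩ := hθ Δ hΔ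
  have hdn : ‖d‖ ≤ Δ := hd
  -- θ Δ ≤ 0
  have hθ0 : θ Δ ≤ 0 := by
    have h0 : (0 : EuclideanSpace ℝ (Fin n)) ∈ {d : EuclideanSpace ℝ (Fin n) | ‖d‖ ≤ Δ} := by
      simp [hΔpos.le]
    have := hlb (Set.mem_image_of_mem _ h0)
    simpa using this
  set τ : ℝ := min (Δ₀ / Δ) (-(θ Δ) / (b * Δ ^ 2)) with hτdef
  have hbΔ2 : 0 < b * Δ ^ 2 := by positivity
  have hτ0 : 0 ≤ τ :=
    le_min (div_nonneg hΔ₀.le hΔpos.le) (div_nonneg (by linarith) hbΔ2.le)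
  have hτa : τ ≤ Δ₀ / Δ := min_le_left _ _
  have hτb : τ * (b * Δ ^ 2) ≤ -(θ Δ) := by
    have := min_le_right (Δ₀ / Δ) (-(θ Δ) / (b * Δ ^ 2))
    rw [le_div_iff₀ hbΔ2] at this
    exact this
  have hfeas : τ • d ∈ {d : EuclideanSpace ℝ (Fin n) | ‖d‖ ≤ Δ₀} := by
    simp only [Set.mem_setOf_eq, norm_smul, Real.norm_eq_abs, abs_of_nonneg hτ0]
    calc τ * ‖d‖ ≤ (Δ₀ / Δ) * Δ :=
          mul_le_mul hτa hdn (norm_nonneg d) (div_nonneg hΔ₀.le hΔpos.le)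
      _ = Δ₀ := div_mul_cancel₀ _ hΔpos.ne'
  have h1 := ht₀.2 (Set.mem_image_of_mem _ hfeas)
  have hsup : (Finset.univ : Finset (Fin m)).sup' Finset.univ_nonempty
      (fun j => ⟪gradient (f j) x, τ • d⟫ + (1 / 2) * ⟪τ • d, B j (τ • d)⟫
        + g j (x + τ • d) - g j x) ≤ τ * θ Δ + τ ^ 2 * (b * Δ ^ 2) / 2 := by
    apply Finset.sup'_le
    intro j _
    have hτ1 : τ ≤ 1 := hτa.trans (by rw [div_le_one hΔpos]; exact hΔ)
    have hconv : g j (x + τ • d) ≤ τ * g j (x + d) + (1 - τ) * g j x := by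
      have h := (hg_conv j).2 (Set.mem_univ (x + d)) (Set.mem_univ x)
        hτ0 (show (0:ℝ) ≤ 1 - τ by linarith) (show τ + (1 - τ) = 1 by ring)
      have he : x + τ • d = τ • (x + d) + (1 - τ) • x := by module
      rw [he]
      exact h
    have hquad : ⟪τ • d, B j (τ • d)⟫ ≤ τ ^ 2 * (b * Δ ^ 2) := by
      have h1' : ⟪d, B j d⟫ ≤ b * Δ ^ 2 :=
        (hB_bound j d).trans
          (mul_le_mul_of_nonneg_left (pow_le_pow_left₀ (norm_nonneg d) hdn 2) hb.le)
      have h2 : ⟪τ • d, B j (τ • d)⟫ = τ ^ 2 * ⟪d, B j d⟫ := by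
        rw [map_smul, real_inner_smul_left, real_inner_smul_right]
        ring
      rw [h2]
      nlinarith [sq_nonneg τ]
    have hlin : ⟪gradient (f j) x, τ • d⟫ = τ * ⟪gradient (f j) x, d⟫ :=
      real_inner_smul_right _ _ _
    have hj : ⟪gradient (f j) x, d⟫ + g j (x + d) - g j x ≤ θ Δ := by
      rw [← hdval]
      exact Finset.le_sup' (fun j => ⟪gradient (f j) x, d⟫ + g j (x + d) - g j x)
        (Finset.mem_univ j)
    have hjτ : τ * (⟪gradient (f j) x, d⟫ + g j (x + d) - g j x) ≤ τ * θ Δ :=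
      mul_le_mul_of_nonneg_left hj hτ0
    rw [hlin]
    nlinarith [hconv, hquad, hjτ]
  have h2 : t₀ ≤ τ * θ Δ + τ ^ 2 * (b * Δ ^ 2) / 2 := h1.trans hsup
  have hmin : min Δ₀ (-(θ Δ) / (b * Δ)) = Δ * τ := by
    rw [hτdef]
    rcases le_total (Δ₀ / Δ) (-(θ Δ) / (b * Δ ^ 2)) with h | h
    · rw [min_eq_left h, min_eq_left]
      · field_simp
      · rw [div_le_div_iff₀ hΔpos (by positivity)] at h
        rw [le_div_iff₀ (by positivity)]
        nlinarith
    · rw [min_eq_right h, min_eq_right]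
      · field_simp
      · rw [div_le_div_iff₀ (by positivity) hΔpos] at h
        rw [div_le_iff₀ (by positivity)]
        nlinarith
  rw [hmin]
  have hfin : τ * θ Δ + τ ^ 2 * (b * Δ ^ 2) / 2 ≤ θ Δ / (2 * Δ) * (Δ * τ) := by
    have h3 : θ Δ / (2 * Δ) * (Δ * τ) = τ * θ Δ / 2 := by
      field_simp
    rw [h3]
    nlinarith [mul_le_mul_of_nonneg_left hτb hτ0]
  linarith
end
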